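/- The function c₁ is antitone (monotone nonincreasing), c₁(x) < 0 for every x ∈ ℝ, c₁(x) → 0 as x → −∞, c₁(x) → −I as x → +∞; the critical set {x : c₁′(x) = 0} equals {x : P(x) = 0}, a closed and discrete subset of ℝ; the set of critical values c₁({x : P(x) = 0}) is a discrete and closed subset of the subspace ℝ ∖ {0, −I}; and 0 lies in the closure of the set of critical values but is not a critical value. -/

import Mathlib

/-! The zeros of the analytic function `P ≢ 0` form a closed discrete, hence countable and
Lebesgue-null, set. So `eᵗP(t) > 0` almost everywhere, its integral over any set of positive
measure is positive, and `c₁` is strictly decreasing from `0` to `-I`. A value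
`c₁ b < y < c₁ a` has a neighbourhood containing only the finitely many critical values coming
from zeros in `[a, b]`, so the critical values can only accumulate at the ends `0` and `-I`. -/

open Filter MeasureTheory Set Topology

theorem AnalyticOnNhd.not_accPt_setOf_eq_zero {𝕜 E : Type*} [NontriviallyNormedField 𝕜]
    [ConnectedSpace 𝕜] [NormedAddCommGroup E] [NormedSpace 𝕜 E] {f : 𝕜 → E}
    (hf : AnalyticOnNhd 𝕜 f univ) {x₀ : 𝕜} (hx₀ : f x₀ ≠ 0) (y : 𝕜) :
    ¬AccPt y (𝓟 {x | f x = 0}) := by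
  have := mem_codiscrete_accPt.mp (hf.preimage_zero_mem_codiscrete hx₀) y
  rwa [preimage_compl, compl_compl] at this

theorem AnalyticOnNhd.ae_ne_zero {E : Type*} [NormedAddCommGroup E] [NormedSpace ℝ E]
    {f : ℝ → E} (hf : AnalyticOnNhd ℝ f univ) {x₀ : ℝ} (hx₀ : f x₀ ≠ 0)
    (μ : Measure ℝ) [NullSingletonClass μ] : ∀ᵐ x ∂μ, f x ≠ 0 := by
  have := ae_restrict_le_codiscreteWithin (μ := μ) MeasurableSet.univ
    (hf.preimage_zero_mem_codiscrete hx₀)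
  rwa [Measure.restrict_univ] at this

theorem setIntegral_pos_of_nonneg_of_ae_ne_zero {α : Type*} [MeasurableSpace α]
    {μ : Measure α} {f : α → ℝ} (hf : 0 ≤ f) (hfi : Integrable f μ)
    (hne : ∀ᵐ x ∂μ, f x ≠ 0) {s : Set α} (hμs : μ s ≠ 0) :
    0 < ∫ x in s, f x ∂μ := by
  rw [setIntegral_pos_iff_support_of_nonneg_ae (ae_of_all _ hf) hfi.integrableOn, inter_comm,
    measure_inter_conull]
  · exact pos_iff_ne_zero.mpr hμs
  · simpa [ae_iff, Function.compl_support] using hne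

theorem hasDerivAt_integral_Iic {E : Type*} [NormedAddCommGroup E] [NormedSpace ℝ E]
    [CompleteSpace E] {g : ℝ → E} (hg : Integrable g) {x : ℝ} (hx : ContinuousAt g x) :
    HasDerivAt (fun u => ∫ t in Iic u, g t) (g x) x := by
  have hsplit :
      (fun u => ∫ t in Iic u, g t) = fun u => (∫ t in Iic 0, g t) + ∫ t in 0..u, g t := by
    funext u
    rw [← intervalIntegral.integral_Iic_sub_Iic hg.integrableOn hg.integrableOn]
    abel
  rw [hsplit]
  exact (intervalIntegral.integral_hasDerivAt_right hg.intervalIntegrable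
    hg.aestronglyMeasurable.stronglyMeasurableAtFilter hx).const_add _

theorem tendsto_integral_Iic_atTop {E : Type*} [NormedAddCommGroup E] [NormedSpace ℝ E]
    {μ : Measure ℝ} {g : ℝ → E} (hg : Integrable g μ) :
    Tendsto (fun x => ∫ t in Iic x, g t ∂μ) atTop (𝓝 (∫ t, g t ∂μ)) :=
  (aecover_Iic tendsto_id).integral_tendsto_of_countably_generated hg

section NonnegIntegrand

variable {g : ℝ → ℝ}

theorem strictMono_integral_Iic (hg0 : 0 ≤ g) (hg : Integrable g) (hgne : ∀ᵐ t, g t ≠ 0) :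
    StrictMono fun x => ∫ t in Iic x, g t := by
  intro a b hab
  have hIoc : 0 < ∫ t in Ioc a b, g t :=
    setIntegral_pos_of_nonneg_of_ae_ne_zero hg0 hg hgne (by simp [hab])
  have hsub := intervalIntegral.integral_Iic_sub_Iic hg.integrableOn (a := a) (b := b)
    hg.integrableOn
  rw [intervalIntegral.integral_of_le hab.le] at hsub
  linarith

theorem integral_Iic_pos (hg0 : 0 ≤ g) (hg : Integrable g) (hgne : ∀ᵐ t, g t ≠ 0)
    (x : ℝ) :
    0 < ∫ t in Iic x, g t :=
  setIntegral_pos_of_nonneg_of_ae_ne_zero hg0 hg hgne (by simp)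

end NonnegIntegrand

theorem StrictAnti.not_accPt_image_of_mem_Ioo {f : ℝ → ℝ} (hf : StrictAnti f) {Z : Set ℝ}
    (hZ : Zᶜ ∈ codiscrete ℝ) {a b y : ℝ} (hy : y ∈ Ioo (f b) (f a)) :
    ¬AccPt y (𝓟 (f '' Z)) := by
  intro hacc
  have hfin : (f '' (Icc a b \ Zᶜ)).Finite :=
    (isCompact_Icc.finite_sdiff_of_mem_codiscreteWithin
      (codiscreteWithin_mono (subset_univ _) hZ)).image f
  refine hfin.not_infinite
    (Set.Infinite.of_accPt ((hacc.nhds_inter (Ioo_mem_nhds hy.1 hy.2)).mono ?_))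
  rw [principal_mono]
  rintro _ ⟨⟨hb, ha⟩, x, hx, rfl⟩
  exact ⟨x, ⟨⟨hf.le_iff_ge.mp ha.le, hf.le_iff_ge.mp hb.le⟩, not_not.mpr hx⟩, rfl⟩

theorem StrictAnti.not_accPt_image {f : ℝ → ℝ} (hf : StrictAnti f) {Z : Set ℝ}
    (hZ : Zᶜ ∈ codiscrete ℝ) {l u : ℝ} (hbot : Tendsto f atBot (𝓝 u))
    (htop : Tendsto f atTop (𝓝 l)) {y : ℝ} (hy : y ∉ ({u, l} : Set ℝ)) :
    ¬AccPt y (𝓟 (f '' Z)) := by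
  intro hacc
  have hyIcc : y ∈ Icc l u := by
    refine closure_minimal ?_ isClosed_Icc
      (mem_closure_iff_clusterPt.mpr hacc.clusterPt)
    rintro _ ⟨x, -, rfl⟩
    exact ⟨hf.antitone.le_of_tendsto htop x, hf.antitone.ge_of_tendsto hbot x⟩
  simp only [mem_insert_iff, mem_singleton_iff, not_or] at hy
  obtain ⟨a, ha⟩ := (hbot.eventually (eventually_gt_nhds (lt_of_le_of_ne hyIcc.2 hy.1))).exists
  obtain ⟨b, hb⟩ :=
    (htop.eventually (eventually_lt_nhds (lt_of_le_of_ne hyIcc.1 (Ne.symm hy.2)))).exists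
  exact hf.not_accPt_image_of_mem_Ioo hZ ⟨hb, ha⟩ hacc

theorem mem_closure_image_of_tendsto_atBot {α X : Type*} [LinearOrder α] [Nonempty α]
    [TopologicalSpace X] {f : α → X} {Z : Set α} (hZ : ¬BddBelow Z) {l : X}
    (hf : Tendsto f atBot (𝓝 l)) : l ∈ closure (f '' Z) := by
  refine mem_closure_of_frequently_of_tendsto (frequently_atBot.mpr fun a => ?_) hf
  obtain ⟨x, hxZ, hxa⟩ := not_bddBelow_iff.mp hZ a
  exact ⟨x, hxa.le, mem_image_of_mem f hxZ⟩

/-- With `P` real analytic, nonnegative, not identically `0`, zero set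
unbounded below, `t ↦ eᵗP(t)` integrable, `I = ∫_ℝ eᵗP(t) dt` and
`c₁(x) = −∫_{−∞}^x eᵗP(t) dt`: `c₁` is antitone, `c₁ < 0` everywhere, `c₁ → 0` at `−∞`,
`c₁ → −I` at `+∞`; the critical set `{x | c₁′(x) = 0}` equals `{x | P(x) = 0}`, a closed
and discrete subset of `ℝ`; the set of critical values is a discrete and closed subset of
the subspace `ℝ ∖ {0, −I}`; and `0` lies in the closure of the set of critical values but
is not a critical value. -/
theorem stmt13 (P : ℝ → ℝ) (hP : AnalyticOnNhd ℝ P Set.univ)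
    (hP0 : ∀ x : ℝ, 0 ≤ P x) (hPne : ∃ x : ℝ, P x ≠ 0)
    (hzero : ¬ BddBelow {x : ℝ | P x = 0})
    (hInt : Integrable (fun t : ℝ => Real.exp t * P t))
    (I : ℝ) (hI : I = ∫ t : ℝ, Real.exp t * P t)
    (c₁ : ℝ → ℝ) (hc₁ : ∀ x : ℝ, c₁ x = -∫ t in Set.Iic x, Real.exp t * P t) :
    Antitone c₁ ∧ (∀ x : ℝ, c₁ x < 0) ∧
      Tendsto c₁ atBot (nhds 0) ∧ Tendsto c₁ atTop (nhds (-I)) ∧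
      {x : ℝ | deriv c₁ x = 0} = {x : ℝ | P x = 0} ∧
      (∀ y : ℝ, ¬ AccPt y (𝓟 {x : ℝ | P x = 0})) ∧
      (∀ y : ℝ, y ∉ ({0, -I} : Set ℝ) → ¬ AccPt y (𝓟 (c₁ '' {x : ℝ | P x = 0}))) ∧
      (0 : ℝ) ∈ closure (c₁ '' {x : ℝ | P x = 0}) ∧
      0 ∉ c₁ '' {x : ℝ | P x = 0} := by
  obtain ⟨x₀, hx₀⟩ := hPne
  set g : ℝ → ℝ := fun t => Real.exp t * P t
  have hg0 : 0 ≤ g := fun t => mul_nonneg (Real.exp_pos t).le (hP0 t)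
  have hgne : ∀ᵐ t, g t ≠ 0 :=
    (hP.ae_ne_zero hx₀ volume).mono fun t ht => mul_ne_zero (Real.exp_ne_zero t) ht
  have hgc : Continuous g := Real.continuous_exp.mul (continuousOn_univ.mp hP.continuousOn)
  have hc : c₁ = fun x => -∫ t in Iic x, g t := funext hc₁
  have hanti : StrictAnti c₁ := hc ▸ (strictMono_integral_Iic hg0 hInt hgne).neg
  have hneg (x : ℝ) : c₁ x < 0 := hc ▸ neg_neg_of_pos (integral_Iic_pos hg0 hInt hgne x)
  have hbot : Tendsto c₁ atBot (𝓝 0) := by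
    simpa [hc] using (tendsto_integral_Iic_zero (f := g) (μ := volume) tendsto_id).neg
  have htop : Tendsto c₁ atTop (𝓝 (-I)) := hc ▸ hI ▸ (tendsto_integral_Iic_atTop hInt).neg
  have hderiv (x : ℝ) : HasDerivAt c₁ (-g x) x :=
    hc ▸ (hasDerivAt_integral_Iic hInt hgc.continuousAt).neg
  have hcod : {x | P x = 0}ᶜ ∈ codiscrete ℝ := hP.preimage_zero_mem_codiscrete hx₀
  refine ⟨hanti.antitone, hneg, hbot, htop, ?_, hP.not_accPt_setOf_eq_zero hx₀,
    fun y => hanti.not_accPt_image hcod hbot htop,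
    mem_closure_image_of_tendsto_atBot hzero hbot, ?_⟩
  · ext x
    simp [(hderiv x).deriv, g, Real.exp_ne_zero]
  · rintro ⟨x, -, hx⟩
    exact (hneg x).ne hx
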